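/- If for each episode k, π^k is a Nash equilibrium of the optimistic game with payoffs V̄_i^k, and V̄_i^k(μ) ≥ V_i(μ) for every pure strategy profile μ and every player i, then the Nash regret satisfies Σ_k max_i (max_{a_i} E_{μ_{-i}~π^k_{-i}}[V_i(a_i, μ_{-i})] − V_i(π^k)) ≤ Σ_k max_i E_{μ~π^k}[V̄_i^k(μ) − V_i(μ)]. -/

import Mathlib

open Finset

/-
Optimism makes each player's deviation value under the true payoffs at most the deviation value
under the optimistic payoffs, and the Nash property of `π k` for the optimistic game caps the
latter by the optimistic value of `π k`. Hence each player's regret in episode `k` is at most the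
expected optimism gap, and summing over episodes gives the bound.
-/

section

variable {Ω : Type*} [Fintype Ω]

lemma sum_mul_le_sum_mul_of_le {w f g : Ω → ℝ} (hw : 0 ≤ w) (hfg : f ≤ g) :
    ∑ μ, w μ * f μ ≤ ∑ μ, w μ * g μ :=
  sum_le_sum fun μ _ => mul_le_mul_of_nonneg_left (hfg μ) (hw μ)

lemma sup'_sub_le_optimism_gap {A : Type*} {s : Finset A} (hs : s.Nonempty)
    {w V Vbar : Ω → ℝ} (hw : 0 ≤ w) (hV : V ≤ Vbar) (dev : A → Ω → Ω)
    (hNash : s.sup' hs (fun a => ∑ μ, w μ * Vbar (dev a μ)) ≤ ∑ μ, w μ * Vbar μ) :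
    s.sup' hs (fun a => ∑ μ, w μ * V (dev a μ)) - ∑ μ, w μ * V μ
      ≤ ∑ μ, w μ * (Vbar μ - V μ) := by
  have hdev : s.sup' hs (fun a => ∑ μ, w μ * V (dev a μ)) ≤ ∑ μ, w μ * Vbar μ :=
    (sup'_mono_fun fun a _ => sum_mul_le_sum_mul_of_le hw fun μ => hV (dev a μ)).trans hNash
  calc s.sup' hs (fun a => ∑ μ, w μ * V (dev a μ)) - ∑ μ, w μ * V μ
      ≤ ∑ μ, w μ * Vbar μ - ∑ μ, w μ * V μ := sub_le_sub_right hdev _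
    _ = ∑ μ, w μ * (Vbar μ - V μ) := by simp only [mul_sub, sum_sub_distrib]

end

theorem nash_regret_via_optimism_general {n K : ℕ} (S : Fin n → Type*)
    [∀ i, Fintype (S i)] [∀ i, Nonempty (S i)] (hn : 0 < n)
    (V : Fin n → (∀ i, S i) → ℝ)                 -- true values
    (Vbar : Fin K → Fin n → (∀ i, S i) → ℝ)      -- optimistic values
    (π : Fin K → (∀ i, S i) → ℝ)
    (hπ0 : ∀ k μ, 0 ≤ π k μ)
    (hoptim : ∀ k i μ, V i μ ≤ Vbar k i μ)
    (hNash : ∀ k (i : Fin n),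
      (Finset.univ.sup' Finset.univ_nonempty (fun a : S i =>
        ∑ μ, π k μ * Vbar k i (Function.update μ i a)))
        = ∑ μ, π k μ * Vbar k i μ) :
    haveI : Nonempty (Fin n) := Fin.pos_iff_nonempty.mp hn
    (∑ k : Fin K,
      Finset.univ.sup' Finset.univ_nonempty (fun i : Fin n =>
        (Finset.univ.sup' Finset.univ_nonempty (fun a : S i =>
          ∑ μ, π k μ * V i (Function.update μ i a)))
          - ∑ μ, π k μ * V i μ))
      ≤ ∑ k : Fin K,
          Finset.univ.sup' Finset.univ_nonempty (fun i : Fin n =>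
            ∑ μ, π k μ * (Vbar k i μ - V i μ)) := by
  have : Nonempty (Fin n) := Fin.pos_iff_nonempty.mp hn
  refine sum_le_sum fun k _ => sup'_le _ _ fun i _ => ?_
  exact (sup'_sub_le_optimism_gap univ_nonempty (hπ0 k) (hoptim k i)
    (fun a μ => Function.update μ i a) (hNash k i).le).trans
    (le_sup' (fun j => ∑ μ, π k μ * (Vbar k j μ - V j μ)) (mem_univ i))

/-- Nash regret bounded via optimistic value estimates. -/
theorem nash_regret_via_optimism {n K : ℕ} (S : Fin n → Type*)
    [∀ i, Fintype (S i)] [∀ i, Nonempty (S i)] (hn : 0 < n)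
    (V : Fin n → (∀ i, S i) → ℝ)                 -- true values
    (Vbar : Fin K → Fin n → (∀ i, S i) → ℝ)      -- optimistic values
    (π : Fin K → (∀ i, S i) → ℝ)
    (q : Fin K → ∀ i, S i → ℝ)
    (hprod : ∀ k μ, π k μ = ∏ i, q k i (μ i))
    (hπ0 : ∀ k μ, 0 ≤ π k μ) (hπ1 : ∀ k, ∑ μ, π k μ = 1)
    (hoptim : ∀ k i μ, V i μ ≤ Vbar k i μ)
    (hNash : ∀ k (i : Fin n),
      (Finset.univ.sup' Finset.univ_nonempty (fun a : S i =>
        ∑ μ, π k μ * Vbar k i (Function.update μ i a)))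
        = ∑ μ, π k μ * Vbar k i μ) :
    haveI : Nonempty (Fin n) := Fin.pos_iff_nonempty.mp hn
    (∑ k : Fin K,
      Finset.univ.sup' Finset.univ_nonempty (fun i : Fin n =>
        (Finset.univ.sup' Finset.univ_nonempty (fun a : S i =>
          ∑ μ, π k μ * V i (Function.update μ i a)))
          - ∑ μ, π k μ * V i μ))
      ≤ ∑ k : Fin K,
          Finset.univ.sup' Finset.univ_nonempty (fun i : Fin n =>
            ∑ μ, π k μ * (Vbar k i μ - V i μ)) :=
  nash_regret_via_optimism_general S hn V Vbar π hπ0 hoptim hNash
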